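/- Let ε > 0, K ∈ ℕ+, δ ∈ (0, 1/(3K)], let f ∈ C([0,1]^d), and let g : ℝ^d → ℝ be any function with |g(x) − f(x)| ≤ ε for every x ∈ [0,1]^d \ Ω([0,1]^d, K, δ). Define φ_0 := g and, for i = 0, 1, …, d−1, φ_{i+1}(x) := mid(φ_i(x − δ e_{i+1}), φ_i(x), φ_i(x + δ e_{i+1})), where e_1, …, e_d is the standard basis of ℝ^d. Then the function φ := φ_d satisfies |φ(x) − f(x)| ≤ ε + d·ω_f(δ) for every x ∈ [0,1]^d. -/

import Mathlib

/-!
The strips `(k/K - δ, k/K)` making up the trifling region are open intervals of width `δ`,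
separated from each other by gaps of width `1/K - δ ≥ 2δ` and lying at distance `≥ 2δ` from
the ends of `[0,1]`. Hence of the three points `t - δ, t, t + δ` with `t ∈ [0,1]`, at most one fails
to be a good coordinate (one in `[0,1]` outside every strip). By induction on `i`, `φ_i` is
`(ε + iω_f(δ))`-close to `f` at every point of the cube whose coordinates `i+1, …, d` are good:
the median defining `φ_{i+1}(x)` lies between two of the values `φ_i(y)`, `y ∈ {x, x ± δe_{i+1}}`,
taken at points `y` of the cube with good `(i+1)`-st coordinate, and each of these is within
`ε + iω_f(δ)` of `f(y)`, hence within `ε + (i+1)ω_f(δ)` of `f(x)`.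
-/

noncomputable section

/-- the middle (median) value of three reals. -/
def mid (a b c : ℝ) : ℝ := a + b + c - max (max a b) c - min (min a b) c

/-- the unit cube `[0,1]^d`. -/
def unitCube (d : ℕ) : Set (Fin d → ℝ) := Set.Icc 0 1

/-- the trifling region `Ω([0,1]^d, K, δ)`. -/
def trifling (d K : ℕ) (δ : ℝ) : Set (Fin d → ℝ) :=
  {x | x ∈ unitCube d ∧ ∃ i : Fin d, ∃ k : ℕ, 1 ≤ k ∧ k ≤ K - 1 ∧
        x i ∈ Set.Ioo ((k : ℝ) / K - δ) ((k : ℝ) / K)}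

/-- the modulus of continuity of `f` on `[0,1]^d` (w.r.t. the Euclidean norm). -/
def modCont (d : ℕ) (f : (Fin d → ℝ) → ℝ) (r : ℝ) : ℝ :=
  sSup {t | ∃ x ∈ unitCube d, ∃ y ∈ unitCube d,
        Real.sqrt (∑ i, (x i - y i) ^ 2) ≤ r ∧ t = |f x - f y|}

/-- `midSeq d δ g i` is the function `φ_i` obtained from `φ_0 = g` by taking medians of
three copies shifted by `±δ` along the `(i+1)`-st coordinate direction. -/
def midSeq (d : ℕ) (δ : ℝ) (g : (Fin d → ℝ) → ℝ) : ℕ → (Fin d → ℝ) → ℝ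
  | 0 => g
  | i + 1 => fun x =>
      mid (midSeq d δ g i (fun j => x j - if (j : ℕ) = i then δ else 0))
          (midSeq d δ g i x)
          (midSeq d δ g i (fun j => x j + if (j : ℕ) = i then δ else 0))

open Function Set

lemma mid_comm_left (a b c : ℝ) : mid a b c = mid b a c := by
  simp only [mid, max_comm a b, min_comm a b]
  ring

lemma mid_comm_right (a b c : ℝ) : mid a b c = mid a c b := by
  simp only [mid, max_assoc, max_comm b c, min_assoc, min_comm b c]
  ring

lemma mid_mem_uIcc (a b c : ℝ) : mid a b c ∈ uIcc a b := by
  rw [mem_uIcc]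
  unfold mid
  rcases le_total a b with hab | hab <;> rcases le_total b c with hbc | hbc <;>
    rcases le_total a c with hac | hac <;>
    simp only [max_def, min_def] <;> split_ifs <;>
    first | (left; constructor <;> linarith) | (right; constructor <;> linarith)

lemma mid_mem_of_two_mem {s : Set ℝ} [hs : s.OrdConnected] {a b c : ℝ}
    (h : a ∈ s ∧ b ∈ s ∨ a ∈ s ∧ c ∈ s ∨ b ∈ s ∧ c ∈ s) : mid a b c ∈ s := by
  rcases h with ⟨ha, hb⟩ | ⟨ha, hc⟩ | ⟨hb, hc⟩
  · exact hs.uIcc_subset ha hb (mid_mem_uIcc a b c)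
  · rw [mid_comm_right]
    exact hs.uIcc_subset ha hc (mid_mem_uIcc a c b)
  · rw [mid_comm_left, mid_comm_right]
    exact hs.uIcc_subset hb hc (mid_mem_uIcc b c a)

def IsTriflingCoord (K : ℕ) (δ s : ℝ) : Prop :=
  ∃ k : ℕ, 1 ≤ k ∧ k ≤ K - 1 ∧ s ∈ Ioo ((k : ℝ) / K - δ) ((k : ℝ) / K)

def IsGoodCoord (K : ℕ) (δ s : ℝ) : Prop :=
  s ∈ Icc (0 : ℝ) 1 ∧ ¬ IsTriflingCoord K δ s

section TriflingCoord

variable {K : ℕ} {δ s s' : ℝ}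

lemma IsTriflingCoord.mem_Ioo (hδ : 3 * δ ≤ 1 / K) (hs : IsTriflingCoord K δ s) :
    s ∈ Ioo (2 * δ) (1 - 3 * δ) := by
  obtain ⟨k, hk1, hkK, hlo, hhi⟩ := hs
  have hK : (0 : ℝ) < K := by exact_mod_cast (by omega : 0 < K)
  have hk1' : 1 / (K : ℝ) ≤ k / K := by gcongr; exact_mod_cast hk1
  have hkK' : (k : ℝ) / K + 1 / K ≤ 1 := by
    rw [← add_div, div_le_one hK]
    exact_mod_cast (by omega : k + 1 ≤ K)
  constructor <;> linarith

lemma IsTriflingCoord.not_of_le_of_le (hδ : 3 * δ ≤ 1 / K) (hs : IsTriflingCoord K δ s)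
    (h₁ : s + δ ≤ s') (h₂ : s' ≤ s + 2 * δ) : ¬ IsTriflingCoord K δ s' := by
  obtain ⟨k, -, -, hlo, hhi⟩ := hs
  rintro ⟨k', -, -, hlo', hhi'⟩
  rcases le_or_gt k' k with hk | hk
  · have : (k' : ℝ) / K ≤ k / K := by gcongr
    linarith
  · have : (k : ℝ) / K + 1 / K ≤ k' / K := by
      rw [← add_div]
      gcongr
      exact_mod_cast hk
    linarith

lemma two_of_three_isGoodCoord (hδ0 : 0 < δ) (hδ : 3 * δ ≤ 1 / K) {t : ℝ}
    (ht : t ∈ Icc (0 : ℝ) 1) :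
    IsGoodCoord K δ (t - δ) ∧ IsGoodCoord K δ t ∨
      IsGoodCoord K δ (t - δ) ∧ IsGoodCoord K δ (t + δ) ∨
      IsGoodCoord K δ t ∧ IsGoodCoord K δ (t + δ) := by
  obtain ⟨ht0, ht1⟩ := ht
  have hδ3 : 3 * δ ≤ 1 := hδ.trans (by simpa using Nat.cast_inv_le_one K)
  have lo (s) (h : s ≤ 2 * δ) : ¬ IsTriflingCoord K δ s :=
    fun hs => (hs.mem_Ioo hδ).1.not_ge h
  have hi (s) (h : 1 - 3 * δ ≤ s) : ¬ IsTriflingCoord K δ s :=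
    fun hs => (hs.mem_Ioo hδ).2.not_ge h
  by_cases hlow : t < δ
  · exact Or.inr <| Or.inr ⟨⟨⟨ht0, ht1⟩, lo t (by linarith)⟩,
      ⟨⟨by linarith, by linarith⟩, lo (t + δ) (by linarith)⟩⟩
  by_cases hhigh : 1 - δ < t
  · exact Or.inl ⟨⟨⟨by linarith, by linarith⟩, hi (t - δ) (by linarith)⟩,
      ⟨⟨ht0, ht1⟩, hi t (by linarith)⟩⟩
  rw [not_lt] at hlow hhigh
  have hm : t - δ ∈ Icc (0 : ℝ) 1 := ⟨by linarith, by linarith⟩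
  have hp : t + δ ∈ Icc (0 : ℝ) 1 := ⟨by linarith, by linarith⟩
  by_cases hmt : IsTriflingCoord K δ (t - δ)
  · exact Or.inr <| Or.inr ⟨⟨⟨ht0, ht1⟩, hmt.not_of_le_of_le hδ (by linarith) (by linarith)⟩,
      ⟨hp, hmt.not_of_le_of_le hδ (by linarith) (by linarith)⟩⟩
  by_cases htt : IsTriflingCoord K δ t
  · exact Or.inr <| Or.inl
      ⟨⟨hm, hmt⟩, ⟨hp, htt.not_of_le_of_le hδ (by linarith) (by linarith)⟩⟩
  · exact Or.inl ⟨⟨hm, hmt⟩, ⟨⟨ht0, ht1⟩, htt⟩⟩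

end TriflingCoord

section Cube

variable {d : ℕ}

lemma update_mem_unitCube {x : Fin d → ℝ} (hx : x ∈ unitCube d) (I : Fin d) {s : ℝ}
    (hs : s ∈ Icc (0 : ℝ) 1) : update x I s ∈ unitCube d := by
  rw [unitCube, ← pi_univ_Icc] at hx ⊢
  exact (update_mem_pi_iff_of_mem hx).2 fun _ => hs

lemma sqrt_sum_sq_update_sub {ι : Type*} [Fintype ι] [DecidableEq ι] (x : ι → ℝ) (I : ι)
    (s : ℝ) :
    √(∑ j, (update x I s j - x j) ^ 2) = |s - x I| := by
  rw [Finset.sum_eq_single I (fun j _ hj => by simp [update_of_ne hj]) (by simp),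
    update_self, Real.sqrt_sq_eq_abs]

lemma abs_sub_le_modCont {f : (Fin d → ℝ) → ℝ} (hf : ContinuousOn f (unitCube d))
    {x y : Fin d → ℝ} (hx : x ∈ unitCube d) (hy : y ∈ unitCube d) {r : ℝ}
    (hxy : √(∑ i, (x i - y i) ^ 2) ≤ r) : |f x - f y| ≤ modCont d f r := by
  obtain ⟨M, hM⟩ := isCompact_Icc.exists_bound_of_continuousOn hf
  refine le_csSup ⟨2 * M, ?_⟩ ⟨x, hx, y, hy, hxy, rfl⟩
  rintro _ ⟨x', hx', y', hy', -, rfl⟩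
  linarith [norm_sub_le (f x') (f y'), hM x' hx', hM y' hy', Real.norm_eq_abs (f x' - f y')]

end Cube

section MidSeq

variable {d K : ℕ} {δ ε : ℝ} {f g : (Fin d → ℝ) → ℝ}

lemma midSeq_succ_eq_mid_update (I : Fin d) (x : Fin d → ℝ) :
    midSeq d δ g (I + 1) x = mid (midSeq d δ g I (update x I (x I - δ)))
      (midSeq d δ g I (update x I (x I))) (midSeq d δ g I (update x I (x I + δ))) := by
  simp only [midSeq, update_eq_self]
  congr 2 <;> funext j <;> by_cases hj : j = I <;> simp [hj, Fin.val_ne_of_ne]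

lemma abs_midSeq_sub_le (hδ0 : 0 < δ) (hδ : 3 * δ ≤ 1 / K) (hf : ContinuousOn f (unitCube d))
    (hg : ∀ x ∈ unitCube d \ trifling d K δ, |g x - f x| ≤ ε) {i : ℕ} (hi : i ≤ d)
    {x : Fin d → ℝ} (hx : x ∈ unitCube d)
    (hgood : ∀ j : Fin d, i ≤ j → ¬ IsTriflingCoord K δ (x j)) :
    |midSeq d δ g i x - f x| ≤ ε + i * modCont d f δ := by
  induction i generalizing x with
  | zero =>
    simpa only [midSeq, Nat.cast_zero, zero_mul, add_zero] using
      hg x ⟨hx, fun ⟨_, j, hj⟩ => hgood j (Nat.zero_le _) hj⟩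
  | succ i ih =>
    set I : Fin d := ⟨i, hi⟩
    set r : ℝ := ε + (i + 1 : ℕ) * modCont d f δ with hr
    have near (s : ℝ) (hsx : |s - x I| ≤ δ) (hs : IsGoodCoord K δ s) :
        midSeq d δ g I (update x I s) ∈ Metric.closedBall (f x) r := by
      have hy := update_mem_unitCube hx I hs.1
      have hclose := ih (by omega) hy fun j hj => by
        by_cases hjI : j = I
        · simpa [hjI] using hs.2
        · simpa [update_of_ne hjI] using
            hgood j (Nat.lt_of_le_of_ne hj fun h => hjI (Fin.ext h.symm))
      have hfy := abs_sub_le_modCont hf hy hx ((sqrt_sum_sq_update_sub x I s).trans_le hsx)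
      rw [Metric.mem_closedBall, Real.dist_eq, hr]
      push_cast
      linarith [abs_sub_le (midSeq d δ g I (update x I s)) (f (update x I s)) (f x)]
    have hm := near (x I - δ) (by simp [abs_of_pos hδ0])
    have h0 := near (x I) (by simp [hδ0.le])
    have hp := near (x I + δ) (by simp [abs_of_pos hδ0])
    have : (Metric.closedBall (f x) r).OrdConnected := by
      rw [Real.closedBall_eq_Icc]
      infer_instance
    rw [← Real.dist_eq, ← Metric.mem_closedBall, midSeq_succ_eq_mid_update I]
    exact mid_mem_of_two_mem <| (two_of_three_isGoodCoord hδ0 hδ ⟨hx.1 I, hx.2 I⟩).imp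
      (And.imp hm h0) (Or.imp (And.imp hm hp) (And.imp h0 hp))

end MidSeq

theorem mid_shift_extension_multi_dim_general
    (d : ℕ) (ε : ℝ) (K : ℕ)
    (δ : ℝ) (hδ0 : 0 < δ) (hδ1 : δ ≤ 1 / (3 * K))
    (f : (Fin d → ℝ) → ℝ) (hf : ContinuousOn f (unitCube d))
    (g : (Fin d → ℝ) → ℝ)
    (hg : ∀ x ∈ unitCube d \ trifling d K δ, |g x - f x| ≤ ε) :
    ∀ x ∈ unitCube d, |midSeq d δ g d x - f x| ≤ ε + d * modCont d f δ := by
  intro x hx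
  have hδ : 3 * δ ≤ 1 / K := by
    rw [mul_comm, ← div_div] at hδ1
    exact (le_div_iff₀' three_pos).1 hδ1
  exact abs_midSeq_sub_le hδ0 hδ hf hg le_rfl hx fun j hj => absurd j.isLt hj.not_gt

/-- Lemma 3.4: from an approximation valid outside the trifling region, `d` successive
median-of-shifts constructions give an approximation valid on all of `[0,1]^d`. -/
theorem mid_shift_extension_multi_dim
    (d : ℕ) (hd : 0 < d) (ε : ℝ) (hε : 0 < ε) (K : ℕ) (hK : 0 < K)
    (δ : ℝ) (hδ0 : 0 < δ) (hδ1 : δ ≤ 1 / (3 * K))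
    (f : (Fin d → ℝ) → ℝ) (hf : ContinuousOn f (unitCube d))
    (g : (Fin d → ℝ) → ℝ)
    (hg : ∀ x ∈ unitCube d \ trifling d K δ, |g x - f x| ≤ ε) :
    ∀ x ∈ unitCube d, |midSeq d δ g d x - f x| ≤ ε + d * modCont d f δ :=
  mid_shift_extension_multi_dim_general d ε K δ hδ0 hδ1 f hf g hg
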